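/- arXiv:2409.11330 — 3 statements merged into one kernel-verified Lean document; each statement's English description precedes it below -/
import Mathlib

section
/- Fix T > 0 and a complete filtered probability space (Ω, 𝓕, (𝓕_t)_{t ∈ [0,T]}, ℙ). Let p ∈ [2,∞) and let γ, γ', λ, λ' ∈ [0,1] with γ < λ and γ' < λ'. For each k ≥ 0 let W^(k) : [0,T] → ℝ^n be a path and let (X^(k), (X^(k))') be a stochastic controlled rough path over W^(k). Assume: (i) for every k ≥ 1, (X^(k), (X^(k))') ∈ 𝐃_{W^(k)}^{λ,λ'}L_p(ℝ^d) and sup_{k ≥ 1} ‖(X^(k), (X^(k))')‖_{𝐃_{W^(k)}^{λ,λ'}L_p} < ∞; (ii) (X^(0), (X^(0))') ∈ 𝐃_{W^(0)}^{γ,γ'}L_p(ℝ^d); (iii) ‖X^(k), (X^(k))'; X^(0), (X^(0))'‖_{W^(k), W^(0); γ,γ'; p} → 0 as k → ∞. Then for every η ∈ (γ, λ) and η' ∈ (γ', λ'), (X^(0), (X^(0))') ∈ 𝐃_{W^(0)}^{η,η'}L_p(ℝ^d) and ‖X^(k), (X^(k))'; X^(0), (X^(0))'‖_{W^(k), W^(0);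 η,η'; p} → 0 as k → ∞. -/
open MeasureTheory Filter Topology Set ENNReal NNReal

noncomputable section

variable {Ω : Type*} {m0 : MeasurableSpace Ω}

/-- The set of pairs `(s,t)` with `0 ≤ s < t ≤ T`. -/
def SPairs (T : ℝ) : Set (ℝ × ℝ) := {q | 0 ≤ q.1 ∧ q.1 < q.2 ∧ q.2 ≤ T}

/-- Progressive measurability of a process on the time interval `[0,T]` with respect to
the filtration `ℱ`. -/
def ProgMeasOn (T : ℝ) (ℱ : Filtration ℝ m0) {E : Type*} [TopologicalSpace E]
    (X : ℝ → Ω → E) : Prop :=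
  ∀ t ∈ Icc (0:ℝ) T,
    StronglyMeasurable[(inferInstanceAs (MeasurableSpace (Icc (0:ℝ) t)) : MeasurableSpace (Icc (0:ℝ) t)).prod (ℱ t)]
      (fun q : Icc (0:ℝ) t × Ω => X (q.1 : ℝ) q.2)

/-- `sup_{t ∈ [0,T]} ‖X_t‖_{L^p}`, valued in `ℝ≥0∞`. -/
def supLp (T : ℝ) (μ : Measure Ω) (p : ℝ) {E : Type*} [NormedAddCommGroup E]
    (X : ℝ → Ω → E) : ℝ≥0∞ :=
  ⨆ t : Icc (0:ℝ) T, eLpNorm (X (t : ℝ)) (ENNReal.ofReal p) μ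

/-- `‖δX‖_{γ;p} = sup_{0 ≤ s < t ≤ T} ‖X_t − X_s‖_{L^p} / (t−s)^γ`, valued in `ℝ≥0∞`. -/
def deltaLp (T : ℝ) (μ : Measure Ω) (γ p : ℝ) {E : Type*} [NormedAddCommGroup E]
    (X : ℝ → Ω → E) : ℝ≥0∞ :=
  ⨆ q : SPairs T,
    eLpNorm (fun ω => X (q : ℝ × ℝ).2 ω - X (q : ℝ × ℝ).1 ω) (ENNReal.ofReal p) μ /
      ENNReal.ofReal (((q : ℝ × ℝ).2 - (q : ℝ × ℝ).1) ^ γ)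

variable {n : ℕ}

/-- The remainder `R^X_{s,t}(ω) = X_t(ω) − X_s(ω) − X'_s(ω)(W_t − W_s)` of a controlled
pair `(X, X')` over the driving path `W`. -/
def scrpRem (W : ℝ → (Fin n → ℝ)) {E : Type*} [NormedAddCommGroup E] [NormedSpace ℝ E]
    (X : ℝ → Ω → E) (X' : ℝ → Ω → ((Fin n → ℝ) →L[ℝ] E)) (s t : ℝ) : Ω → E :=
  fun ω => X t ω - X s ω - X' s ω (W t - W s)

/-- `‖E_• R^X‖_{θ;p} = sup_{0 ≤ s < t ≤ T} ‖E_s(R^X_{s,t})‖_{L^p} / (t−s)^θ`. -/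
def condRemLp (T : ℝ) (ℱ : Filtration ℝ m0) (μ : Measure Ω) (p θ : ℝ)
    (W : ℝ → (Fin n → ℝ)) {E : Type*} [NormedAddCommGroup E] [NormedSpace ℝ E]
    [CompleteSpace E]
    (X : ℝ → Ω → E) (X' : ℝ → Ω → ((Fin n → ℝ) →L[ℝ] E)) : ℝ≥0∞ :=
  ⨆ q : SPairs T,
    eLpNorm (μ[scrpRem W X X' (q : ℝ × ℝ).1 (q : ℝ × ℝ).2 | ℱ (q : ℝ × ℝ).1])
        (ENNReal.ofReal p) μ /
      ENNReal.ofReal (((q : ℝ × ℝ).2 - (q : ℝ × ℝ).1) ^ θ)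

/-- `(X, X')` is a stochastic controlled rough path in `𝐃_W^{γ,γ'}L_p(E)`: both
components are progressively measurable, `sup_t ‖X_t‖_p`, `‖δX‖_{γ;p}`,
`sup_t ‖X'_t‖_p`, `‖δX'‖_{γ';p}` and `‖E_• R^X‖_{γ+γ';p}` are all finite. -/
def MemSCRP (T : ℝ) (ℱ : Filtration ℝ m0) (μ : Measure Ω) (W : ℝ → (Fin n → ℝ))
    (γ γ' p : ℝ) {E : Type*} [NormedAddCommGroup E] [NormedSpace ℝ E] [CompleteSpace E]
    (X : ℝ → Ω → E) (X' : ℝ → Ω → ((Fin n → ℝ) →L[ℝ] E)) : Prop :=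
  ProgMeasOn T ℱ X ∧ ProgMeasOn T ℱ X' ∧
  supLp T μ p X < ⊤ ∧ deltaLp T μ γ p X < ⊤ ∧
  supLp T μ p X' < ⊤ ∧ deltaLp T μ γ' p X' < ⊤ ∧
  condRemLp T ℱ μ p (γ + γ') W X X' < ⊤

/-- The seminorm `‖(X,X')‖_{𝐃_W^{γ,γ'}L_p}`. -/
def scrpNorm (T : ℝ) (ℱ : Filtration ℝ m0) (μ : Measure Ω) (W : ℝ → (Fin n → ℝ))
    (γ γ' p : ℝ) {E : Type*} [NormedAddCommGroup E] [NormedSpace ℝ E] [CompleteSpace E]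
    (X : ℝ → Ω → E) (X' : ℝ → Ω → ((Fin n → ℝ) →L[ℝ] E)) : ℝ≥0∞ :=
  deltaLp T μ γ p X + supLp T μ p X' + deltaLp T μ γ' p X' +
    condRemLp T ℱ μ p (γ + γ') W X X'

/-- The distance `‖X, X'; X̄, X̄'‖_{W,W̄;γ,γ';p}` between a pair controlled by `W` and a
pair controlled by `W̄`. -/
def scrpDist (T : ℝ) (ℱ : Filtration ℝ m0) (μ : Measure Ω)
    (W Wb : ℝ → (Fin n → ℝ)) (γ γ' p : ℝ)
    {E : Type*} [NormedAddCommGroup E] [NormedSpace ℝ E] [CompleteSpace E]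
    (X : ℝ → Ω → E) (X' : ℝ → Ω → ((Fin n → ℝ) →L[ℝ] E))
    (Xb : ℝ → Ω → E) (Xb' : ℝ → Ω → ((Fin n → ℝ) →L[ℝ] E)) : ℝ≥0∞ :=
  supLp T μ p (fun t ω => X t ω - Xb t ω) +
  deltaLp T μ γ p (fun t ω => X t ω - Xb t ω) +
  supLp T μ p (fun t ω => X' t ω - Xb' t ω) +
  deltaLp T μ γ' p (fun t ω => X' t ω - Xb' t ω) +
  ⨆ q : SPairs T,
    eLpNorm (μ[fun ω => scrpRem W X X' (q : ℝ × ℝ).1 (q : ℝ × ℝ).2 ω -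
          scrpRem Wb Xb Xb' (q : ℝ × ℝ).1 (q : ℝ × ℝ).2 ω | ℱ (q : ℝ × ℝ).1])
        (ENNReal.ofReal p) μ /
      ENNReal.ofReal (((q : ℝ × ℝ).2 - (q : ℝ × ℝ).1) ^ (γ + γ'))

/-!
Each of `δX`, `δX'` and `E_• R^X` is a weighted supremum `sup_{s<t} F(s,t) / (t-s)^θ`.
Letting `k → ∞` in `F⁰ ≤ Fᵏ + |Fᵏ - F⁰|` bounds the `λ`-supremum of the limit by the
uniform bound `M`, so the differences have `λ`-supremum at most `2M`. Since
`F ≤ A (t-s)^γ` and `F ≤ B (t-s)^λ` give `F ≤ A^a B^b (t-s)^η` with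
`a = (λ-η)/(λ-γ)` and `b = (η-γ)/(λ-γ)`, the `η`-supremum of the differences is at most
`d_k^a (2M)^b`, where `d_k → 0` is the `γ`-distance.
-/

lemma ENNReal.le_rpow_mul_rpow_mul_rpow {N A B : ℝ≥0∞} {c γ η lam : ℝ} (hc : 0 < c)
    (hγη : γ < η) (hηl : η < lam)
    (hA : N ≤ A * ENNReal.ofReal (c ^ γ)) (hB : N ≤ B * ENNReal.ofReal (c ^ lam)) :
    N ≤ A ^ ((lam - η) / (lam - γ)) * B ^ ((η - γ) / (lam - γ)) *
      ENNReal.ofReal (c ^ η) := by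
  have hd : 0 < lam - γ := by linarith
  set a := (lam - η) / (lam - γ) with ha_def
  set b := (η - γ) / (lam - γ) with hb_def
  have ha : 0 ≤ a := div_nonneg (by linarith) hd.le
  have hb : 0 ≤ b := div_nonneg (by linarith) hd.le
  have hab : a + b = 1 := by rw [ha_def, hb_def]; field_simp; ring
  have hexp : γ * a + lam * b = η := by rw [ha_def, hb_def]; field_simp; ring
  calc N = N ^ a * N ^ b := by
        rw [← ENNReal.rpow_add_of_nonneg _ _ ha hb, hab, ENNReal.rpow_one]
    _ ≤ (A * ENNReal.ofReal (c ^ γ)) ^ a * (B * ENNReal.ofReal (c ^ lam)) ^ b := by gcongr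
    _ = A ^ a * B ^ b * ENNReal.ofReal (c ^ η) := by
        rw [ENNReal.mul_rpow_of_nonneg _ _ ha, ENNReal.mul_rpow_of_nonneg _ _ hb,
          ENNReal.ofReal_rpow_of_pos (Real.rpow_pos_of_pos hc γ),
          ENNReal.ofReal_rpow_of_pos (Real.rpow_pos_of_pos hc lam),
          ← Real.rpow_mul hc.le, ← Real.rpow_mul hc.le, mul_mul_mul_comm,
          ← ENNReal.ofReal_mul (Real.rpow_nonneg hc.le _), ← Real.rpow_add hc, hexp]

lemma ENNReal.tendsto_add_nhds_zero_iff {α : Type*} {l : Filter α} {f g : α → ℝ≥0∞} :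
    Tendsto (fun x => f x + g x) l (𝓝 0) ↔ Tendsto f l (𝓝 0) ∧ Tendsto g l (𝓝 0) := by
  refine ⟨fun h => ⟨?_, ?_⟩, fun ⟨hf, hg⟩ => by simpa using hf.add hg⟩ <;>
    refine tendsto_of_tendsto_of_tendsto_of_le_of_le tendsto_const_nhds h (fun _ => zero_le)
      fun _ => ?_
  exacts [le_self_add, le_add_self]

def holderSup (T θ : ℝ) (F : ℝ × ℝ → ℝ≥0∞) : ℝ≥0∞ :=
  ⨆ q : SPairs T, F q / ENNReal.ofReal (((q : ℝ × ℝ).2 - (q : ℝ × ℝ).1) ^ θ)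

section HolderSup

variable {T θ : ℝ} {F G H : ℝ × ℝ → ℝ≥0∞}

lemma le_holderSup_mul {q : ℝ × ℝ} (hq : q ∈ SPairs T) :
    F q ≤ holderSup T θ F * ENNReal.ofReal ((q.2 - q.1) ^ θ) :=
  (ENNReal.div_le_iff_le_mul
    (Or.inl (ENNReal.ofReal_pos.2 (Real.rpow_pos_of_pos (sub_pos.2 hq.2.1) θ)).ne')
    (Or.inl ENNReal.ofReal_ne_top)).1
    (le_iSup (fun q : SPairs T => F q / ENNReal.ofReal (((q : ℝ × ℝ).2 - (q : ℝ × ℝ).1) ^ θ))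
      ⟨q, hq⟩)

lemma holderSup_le {K : ℝ≥0∞}
    (h : ∀ q ∈ SPairs T, F q ≤ K * ENNReal.ofReal ((q.2 - q.1) ^ θ)) :
    holderSup T θ F ≤ K :=
  iSup_le fun q => ENNReal.div_le_of_le_mul (h q q.2)

lemma holderSup_le_add (h : ∀ q ∈ SPairs T, F q ≤ G q + H q) :
    holderSup T θ F ≤ holderSup T θ G + holderSup T θ H :=
  holderSup_le fun q hq => (h q hq).trans <| by
    rw [add_mul]; exact add_le_add (le_holderSup_mul hq) (le_holderSup_mul hq)

lemma holderSup_le_mul_rpow {η lam : ℝ} (hηl : η ≤ lam) :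
    holderSup T η F ≤ holderSup T lam F * ENNReal.ofReal (T ^ (lam - η)) :=
  holderSup_le fun q hq => by
    have hc : 0 < q.2 - q.1 := sub_pos.2 hq.2.1
    have hcT : q.2 - q.1 ≤ T := by linarith [hq.1, hq.2.2]
    have hsplit : (q.2 - q.1) ^ lam ≤ T ^ (lam - η) * (q.2 - q.1) ^ η := by
      rw [← sub_add_cancel lam η, Real.rpow_add hc, add_sub_cancel_right]
      gcongr
    calc F q ≤ holderSup T lam F * ENNReal.ofReal ((q.2 - q.1) ^ lam) := le_holderSup_mul hq
      _ ≤ holderSup T lam F * ENNReal.ofReal (T ^ (lam - η) * (q.2 - q.1) ^ η) := by gcongr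
      _ = _ := by
        rw [ENNReal.ofReal_mul (Real.rpow_nonneg (by linarith) _), mul_assoc]

lemma holderSup_le_rpow_mul_rpow {γ η lam : ℝ} (hγη : γ < η) (hηl : η < lam) :
    holderSup T η F ≤
      holderSup T γ F ^ ((lam - η) / (lam - γ)) * holderSup T lam F ^ ((η - γ) / (lam - γ)) :=
  holderSup_le fun _ hq => ENNReal.le_rpow_mul_rpow_mul_rpow (sub_pos.2 hq.2.1) hγη hηl
    (le_holderSup_mul hq) (le_holderSup_mul hq)

end HolderSup

section HolderSupLimits

variable {T θ : ℝ} {F : ℕ → ℝ × ℝ → ℝ≥0∞} {F₀ : ℝ × ℝ → ℝ≥0∞} {G : ℕ → ℝ × ℝ → ℝ≥0∞}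
  {M : ℝ≥0∞}

lemma holderSup_le_of_tendsto {γ : ℝ}
    (htri : ∀ᶠ k in atTop, ∀ q ∈ SPairs T, F₀ q ≤ F k q + G k q)
    (hF : ∀ᶠ k in atTop, holderSup T θ (F k) ≤ M)
    (hG : Tendsto (fun k => holderSup T γ (G k)) atTop (𝓝 0)) :
    holderSup T θ F₀ ≤ M :=
  holderSup_le fun q hq => by
    have hlim : Tendsto (fun k => M * ENNReal.ofReal ((q.2 - q.1) ^ θ) +
        holderSup T γ (G k) * ENNReal.ofReal ((q.2 - q.1) ^ γ)) atTop
        (𝓝 (M * ENNReal.ofReal ((q.2 - q.1) ^ θ))) := by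
      simpa using tendsto_const_nhds.add
        (ENNReal.Tendsto.mul_const hG (Or.inr ENNReal.ofReal_ne_top))
    refine ge_of_tendsto hlim ((htri.and hF).mono fun k ⟨htk, hFk⟩ => (htk q hq).trans ?_)
    gcongr
    exacts [(le_holderSup_mul hq).trans (by gcongr), le_holderSup_mul hq]

theorem holderSup_interpolation {γ η lam : ℝ} (hM : M ≠ ⊤) (hγη : γ < η) (hηl : η < lam)
    (htri : ∀ᶠ k in atTop, ∀ q ∈ SPairs T, F₀ q ≤ F k q + G k q ∧ G k q ≤ F k q + F₀ q)
    (hF : ∀ᶠ k in atTop, holderSup T lam (F k) ≤ M)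
    (hG : Tendsto (fun k => holderSup T γ (G k)) atTop (𝓝 0)) :
    holderSup T η F₀ < ⊤ ∧ Tendsto (fun k => holderSup T η (G k)) atTop (𝓝 0) := by
  have hF₀ : holderSup T lam F₀ ≤ M :=
    holderSup_le_of_tendsto (htri.mono fun k h q hq => (h q hq).1) hF hG
  refine ⟨(holderSup_le_mul_rpow hηl.le).trans_lt
    (ENNReal.mul_lt_top (hF₀.trans_lt hM.lt_top) ENNReal.ofReal_lt_top), ?_⟩
  have hGlam : ∀ᶠ k in atTop, holderSup T lam (G k) ≤ M + M :=
    (htri.and hF).mono fun k ⟨htk, hFk⟩ =>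
      (holderSup_le_add fun q hq => (htk q hq).2).trans (add_le_add hFk hF₀)
  have hbound : Tendsto (fun k => holderSup T γ (G k) ^ ((lam - η) / (lam - γ)) *
      (M + M) ^ ((η - γ) / (lam - γ))) atTop (𝓝 0) := by
    have hpow := hG.ennrpow_const ((lam - η) / (lam - γ))
    rw [ENNReal.zero_rpow_of_pos (div_pos (by linarith) (by linarith))] at hpow
    simpa using ENNReal.Tendsto.mul_const hpow
      (Or.inr (ENNReal.rpow_ne_top_of_nonneg (div_nonneg (by linarith) (by linarith))
        (ENNReal.add_ne_top.2 ⟨hM, hM⟩)))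
  refine tendsto_of_tendsto_of_tendsto_of_le_of_le' tendsto_const_nhds hbound
    (Eventually.of_forall fun _ => zero_le) (hGlam.mono fun k hk => ?_)
  exact (holderSup_le_rpow_mul_rpow hγη hηl).trans
    (by gcongr; exact div_nonneg (by linarith) (by linarith))

end HolderSupLimits

lemma SPairs.fst_mem_Icc {T : ℝ} {q : ℝ × ℝ} (hq : q ∈ SPairs T) : q.1 ∈ Icc (0:ℝ) T :=
  ⟨hq.1, hq.2.1.le.trans hq.2.2⟩

lemma SPairs.snd_mem_Icc {T : ℝ} {q : ℝ × ℝ} (hq : q ∈ SPairs T) : q.2 ∈ Icc (0:ℝ) T :=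
  ⟨hq.1.trans hq.2.1.le, hq.2.2⟩

lemma ProgMeasOn.stronglyMeasurable {T : ℝ} {ℱ : Filtration ℝ m0} {E : Type*}
    [TopologicalSpace E] {X : ℝ → Ω → E} (hX : ProgMeasOn T ℱ X) {u : ℝ}
    (hu : u ∈ Icc (0:ℝ) T) : StronglyMeasurable (X u) := by
  have hslice : @Measurable Ω (Icc (0:ℝ) u × Ω) (ℱ u)
      ((inferInstanceAs (MeasurableSpace (Icc (0:ℝ) u)) :
        MeasurableSpace (Icc (0:ℝ) u)).prod (ℱ u))
      (fun ω => ((⟨u, hu.1, le_rfl⟩ : Icc (0:ℝ) u), ω)) :=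
    measurable_const.prodMk measurable_id
  exact ((hX u hu).comp_measurable hslice).mono (ℱ.le u)

section Processes

variable {T p γ η lam : ℝ} {ℱ : Filtration ℝ m0} {μ : Measure Ω}
  {E : Type*} [NormedAddCommGroup E]

lemma ProgMeasOn.memLp {X : ℝ → Ω → E} (hX : ProgMeasOn T ℱ X) (hS : supLp T μ p X < ⊤)
    {u : ℝ} (hu : u ∈ Icc (0:ℝ) T) : MemLp (X u) (ENNReal.ofReal p) μ :=
  ⟨(hX.stronglyMeasurable hu).aestronglyMeasurable,
    (le_iSup (fun t : Icc (0:ℝ) T => eLpNorm (X t) (ENNReal.ofReal p) μ) ⟨u, hu⟩).trans_lt hS⟩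

lemma MemSCRP.integrable_scrpRem [NormedSpace ℝ E] [CompleteSpace E] [IsFiniteMeasure μ]
    (hp : 1 ≤ p) {W : ℝ → (Fin n → ℝ)} {γ' : ℝ} {X : ℝ → Ω → E}
    {X' : ℝ → Ω → ((Fin n → ℝ) →L[ℝ] E)} (h : MemSCRP T ℱ μ W γ γ' p X X')
    {s t : ℝ} (hs : s ∈ Icc (0:ℝ) T) (ht : t ∈ Icc (0:ℝ) T) :
    Integrable (scrpRem W X X' s t) μ := by
  obtain ⟨hX, hX', hS, -, hS', -, -⟩ := h
  have hq : 1 ≤ ENNReal.ofReal p := ENNReal.one_le_ofReal.2 hp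
  exact (((hX.memLp hS ht).integrable hq).sub ((hX.memLp hS hs).integrable hq)).sub
    ((ContinuousLinearMap.apply ℝ E (W t - W s)).integrable_comp
      ((hX'.memLp hS' hs).integrable hq))

lemma eLpNorm_le_add_eLpNorm_sub {f g : Ω → E} {q : ℝ≥0∞} (hf : AEStronglyMeasurable f μ)
    (hg : AEStronglyMeasurable g μ) (hq : 1 ≤ q) :
    eLpNorm g q μ ≤ eLpNorm f q μ + eLpNorm (f - g) q μ := by
  simpa using eLpNorm_sub_le hf (hf.sub hg) hq

theorem deltaLp_interpolation {Y : ℕ → ℝ → Ω → E} {M : ℝ≥0∞} (hp : 1 ≤ p) (hM : M ≠ ⊤)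
    (hγη : γ < η) (hηl : η < lam)
    (hY : ∀ k, ∀ u ∈ Icc (0:ℝ) T, AEStronglyMeasurable (Y k u) μ)
    (hYM : ∀ᶠ k in atTop, deltaLp T μ lam p (Y k) ≤ M)
    (hlim : Tendsto (fun k => deltaLp T μ γ p (fun t ω => Y k t ω - Y 0 t ω)) atTop (𝓝 0)) :
    deltaLp T μ η p (Y 0) < ⊤ ∧
      Tendsto (fun k => deltaLp T μ η p (fun t ω => Y k t ω - Y 0 t ω)) atTop (𝓝 0) := by
  refine holderSup_interpolation
    (F := fun k q => eLpNorm (fun ω => Y k q.2 ω - Y k q.1 ω) (ENNReal.ofReal p) μ)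
    (F₀ := fun q => eLpNorm (fun ω => Y 0 q.2 ω - Y 0 q.1 ω) (ENNReal.ofReal p) μ)
    (G := fun k q => eLpNorm (fun ω => Y k q.2 ω - Y 0 q.2 ω - (Y k q.1 ω - Y 0 q.1 ω))
      (ENNReal.ofReal p) μ) hM hγη hηl (Eventually.of_forall fun k q hq => ?_) hYM hlim
  have hk := (hY k q.2 (SPairs.snd_mem_Icc hq)).sub (hY k q.1 (SPairs.fst_mem_Icc hq))
  have h0 := (hY 0 q.2 (SPairs.snd_mem_Icc hq)).sub (hY 0 q.1 (SPairs.fst_mem_Icc hq))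
  have hq1 : 1 ≤ ENNReal.ofReal p := ENNReal.one_le_ofReal.2 hp
  have hdiff : (fun ω => Y k q.2 ω - Y 0 q.2 ω - (Y k q.1 ω - Y 0 q.1 ω)) =
      (Y k q.2 - Y k q.1) - (Y 0 q.2 - Y 0 q.1) := by
    funext ω; simp only [Pi.sub_apply]; abel
  simp only [hdiff]
  exact ⟨eLpNorm_le_add_eLpNorm_sub hk h0 hq1, eLpNorm_sub_le hk h0 hq1⟩

theorem condRemLp_interpolation [NormedSpace ℝ E] [CompleteSpace E]
    {W : ℕ → ℝ → (Fin n → ℝ)} {Y : ℕ → ℝ → Ω → E} {Y' : ℕ → ℝ → Ω → ((Fin n → ℝ) →L[ℝ] E)}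
    {M : ℝ≥0∞}
    (hp : 1 ≤ p) (hM : M ≠ ⊤) (hγη : γ < η) (hηl : η < lam)
    (hR : ∀ k, ∀ s ∈ Icc (0:ℝ) T, ∀ t ∈ Icc (0:ℝ) T,
      Integrable (scrpRem (W k) (Y k) (Y' k) s t) μ)
    (hYM : ∀ᶠ k in atTop, condRemLp T ℱ μ p lam (W k) (Y k) (Y' k) ≤ M)
    (hlim : Tendsto (fun k => holderSup T γ fun q => eLpNorm
      (μ[scrpRem (W k) (Y k) (Y' k) q.1 q.2 - scrpRem (W 0) (Y 0) (Y' 0) q.1 q.2 | ℱ q.1])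
      (ENNReal.ofReal p) μ) atTop (𝓝 0)) :
    condRemLp T ℱ μ p η (W 0) (Y 0) (Y' 0) < ⊤ ∧
      Tendsto (fun k => holderSup T η fun q => eLpNorm
        (μ[scrpRem (W k) (Y k) (Y' k) q.1 q.2 - scrpRem (W 0) (Y 0) (Y' 0) q.1 q.2 | ℱ q.1])
        (ENNReal.ofReal p) μ) atTop (𝓝 0) := by
  refine holderSup_interpolation
    (F := fun k q => eLpNorm (μ[scrpRem (W k) (Y k) (Y' k) q.1 q.2 | ℱ q.1])
      (ENNReal.ofReal p) μ)
    (F₀ := fun q => eLpNorm (μ[scrpRem (W 0) (Y 0) (Y' 0) q.1 q.2 | ℱ q.1])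
      (ENNReal.ofReal p) μ)
    hM hγη hηl (Eventually.of_forall fun k q hq => ?_) hYM hlim
  have hk := hR k q.1 (SPairs.fst_mem_Icc hq) q.2 (SPairs.snd_mem_Icc hq)
  have h0 := hR 0 q.1 (SPairs.fst_mem_Icc hq) q.2 (SPairs.snd_mem_Icc hq)
  have hq1 : 1 ≤ ENNReal.ofReal p := ENNReal.one_le_ofReal.2 hp
  have hmeas : ∀ f : Ω → E, AEStronglyMeasurable (μ[f | ℱ q.1]) μ := fun f =>
    (stronglyMeasurable_condExp.mono (ℱ.le q.1)).aestronglyMeasurable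
  rw [eLpNorm_congr_ae (condExp_sub hk h0 _)]
  exact ⟨eLpNorm_le_add_eLpNorm_sub (hmeas _) (hmeas _) hq1,
    eLpNorm_sub_le (hmeas _) (hmeas _) hq1⟩

end Processes

section Seminorms

variable {T p γ γ' : ℝ} {ℱ : Filtration ℝ m0} {μ : Measure Ω} {E : Type*}
  [NormedAddCommGroup E] [NormedSpace ℝ E] [CompleteSpace E]

lemma deltaLp_le_scrpNorm {W : ℝ → (Fin n → ℝ)} {X : ℝ → Ω → E}
    {X' : ℝ → Ω → ((Fin n → ℝ) →L[ℝ] E)} :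
    deltaLp T μ γ p X ≤ scrpNorm T ℱ μ W γ γ' p X X' :=
  le_self_add.trans (le_self_add.trans le_self_add)

lemma deltaLp_deriv_le_scrpNorm {W : ℝ → (Fin n → ℝ)} {X : ℝ → Ω → E}
    {X' : ℝ → Ω → ((Fin n → ℝ) →L[ℝ] E)} :
    deltaLp T μ γ' p X' ≤ scrpNorm T ℱ μ W γ γ' p X X' :=
  le_add_self.trans le_self_add

lemma condRemLp_le_scrpNorm {W : ℝ → (Fin n → ℝ)} {X : ℝ → Ω → E}
    {X' : ℝ → Ω → ((Fin n → ℝ) →L[ℝ] E)} :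
    condRemLp T ℱ μ p (γ + γ') W X X' ≤ scrpNorm T ℱ μ W γ γ' p X X' :=
  le_add_self

lemma tendsto_scrpDist_zero_iff {W : ℕ → ℝ → (Fin n → ℝ)} {W₀ : ℝ → (Fin n → ℝ)}
    {X : ℕ → ℝ → Ω → E} {X' : ℕ → ℝ → Ω → ((Fin n → ℝ) →L[ℝ] E)} {X₀ : ℝ → Ω → E}
    {X₀' : ℝ → Ω → ((Fin n → ℝ) →L[ℝ] E)} :
    Tendsto (fun k => scrpDist T ℱ μ (W k) W₀ γ γ' p (X k) (X' k) X₀ X₀') atTop (𝓝 0) ↔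
      Tendsto (fun k => supLp T μ p fun t ω => X k t ω - X₀ t ω) atTop (𝓝 0) ∧
      Tendsto (fun k => deltaLp T μ γ p fun t ω => X k t ω - X₀ t ω) atTop (𝓝 0) ∧
      Tendsto (fun k => supLp T μ p fun t ω => X' k t ω - X₀' t ω) atTop (𝓝 0) ∧
      Tendsto (fun k => deltaLp T μ γ' p fun t ω => X' k t ω - X₀' t ω) atTop (𝓝 0) ∧
      Tendsto (fun k => holderSup T (γ + γ') fun q => eLpNorm
        (μ[scrpRem (W k) (X k) (X' k) q.1 q.2 - scrpRem W₀ X₀ X₀' q.1 q.2 | ℱ q.1])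
        (ENNReal.ofReal p) μ) atTop (𝓝 0) := by
  simp only [scrpDist, ENNReal.tendsto_add_nhds_zero_iff, and_assoc]
  rfl

end Seminorms

theorem scrp_interpolation_general
    {n d : ℕ} (T : ℝ)
    (ℱ : Filtration ℝ m0) (μ : Measure Ω) [IsProbabilityMeasure μ]
    (p γ γ' lam lam' : ℝ) (hp : 2 ≤ p)
    (W : ℕ → ℝ → (Fin n → ℝ))
    (X : ℕ → ℝ → Ω → (Fin d → ℝ))
    (X' : ℕ → ℝ → Ω → ((Fin n → ℝ) →L[ℝ] (Fin d → ℝ)))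
    (h1 : ∀ k : ℕ, 1 ≤ k → MemSCRP T ℱ μ (W k) lam lam' p (X k) (X' k))
    (h1bdd : (⨆ k : {k : ℕ // 1 ≤ k},
      scrpNorm T ℱ μ (W k) lam lam' p (X k) (X' k)) < ⊤)
    (h2 : MemSCRP T ℱ μ (W 0) γ γ' p (X 0) (X' 0))
    (h3 : Tendsto
      (fun k => scrpDist T ℱ μ (W k) (W 0) γ γ' p (X k) (X' k) (X 0) (X' 0))
      atTop (𝓝 0)) :
    ∀ η η' : ℝ, γ < η → η < lam → γ' < η' → η' < lam' →
      MemSCRP T ℱ μ (W 0) η η' p (X 0) (X' 0) ∧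
      Tendsto
        (fun k => scrpDist T ℱ μ (W k) (W 0) η η' p (X k) (X' k) (X 0) (X' 0))
        atTop (𝓝 0) := by
  intro η η' hγη hηl hγ'η' hη'l
  have hp1 : 1 ≤ p := by linarith
  have hmem : ∀ k, ∃ a b, MemSCRP T ℱ μ (W k) a b p (X k) (X' k) := fun k =>
    k.eq_zero_or_pos.elim (fun hk => hk ▸ ⟨γ, γ', h2⟩) fun hk => ⟨lam, lam', h1 k hk⟩
  have hM : ∀ᶠ k in atTop, scrpNorm T ℱ μ (W k) lam lam' p (X k) (X' k) ≤
      ⨆ k : {k : ℕ // 1 ≤ k}, scrpNorm T ℱ μ (W k) lam lam' p (X k) (X' k) :=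
    eventually_atTop.2 ⟨1, fun k hk => le_iSup
      (fun j : {k : ℕ // 1 ≤ k} => scrpNorm T ℱ μ (W j) lam lam' p (X j) (X' j)) ⟨k, hk⟩⟩
  obtain ⟨hsup, hδ, hsup', hδ', hrem⟩ := tendsto_scrpDist_zero_iff.1 h3
  obtain ⟨hXη, hδη⟩ := deltaLp_interpolation hp1 h1bdd.ne hγη hηl
    (fun k u hu => (hmem k).elim fun _ ⟨_, h⟩ =>
      (h.1.stronglyMeasurable hu).aestronglyMeasurable)
    (hM.mono fun _ hk => deltaLp_le_scrpNorm.trans hk) hδ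
  obtain ⟨hX'η', hδη'⟩ := deltaLp_interpolation hp1 h1bdd.ne hγ'η' hη'l
    (fun k u hu => (hmem k).elim fun _ ⟨_, h⟩ =>
      (h.2.1.stronglyMeasurable hu).aestronglyMeasurable)
    (hM.mono fun _ hk => deltaLp_deriv_le_scrpNorm.trans hk) hδ'
  obtain ⟨hRη, hremη⟩ := condRemLp_interpolation hp1 h1bdd.ne (add_lt_add hγη hγ'η')
    (add_lt_add hηl hη'l)
    (fun k s hs t ht => (hmem k).elim fun _ ⟨_, h⟩ => h.integrable_scrpRem hp1 hs ht)
    (hM.mono fun _ hk => condRemLp_le_scrpNorm.trans hk) hrem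
  obtain ⟨hX, hX', hS, -, hS', -, -⟩ := h2
  exact ⟨⟨hX, hX', hS, hXη, hS', hX'η', hRη⟩,
    tendsto_scrpDist_zero_iff.2 ⟨hsup, hδη, hsup', hδη', hremη⟩⟩

/-- **Interpolation for stochastic controlled rough paths.** Fix `T > 0`, a complete
filtered probability space, `p ∈ [2,∞)` and exponents `γ < λ`, `γ' < λ'` in `[0,1]`.
For each `k ≥ 0` let `(X^{(k)}, (X^{(k)})')` be a stochastic controlled rough path over
the path `W^{(k)}`. Assume: (i) for `k ≥ 1` they lie in `𝐃_{W^{(k)}}^{λ,λ'}L_p(ℝ^d)`,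
with uniformly bounded seminorms; (ii) `(X^{(0)}, (X^{(0)})') ∈ 𝐃_{W^{(0)}}^{γ,γ'}L_p`;
(iii) the distance `‖X^{(k)}, (X^{(k)})'; X^{(0)}, (X^{(0)})'‖_{W^{(k)},W^{(0)};γ,γ';p}`
tends to `0`. Then for all `η ∈ (γ,λ)`, `η' ∈ (γ',λ')`, the limit pair lies in
`𝐃_{W^{(0)}}^{η,η'}L_p(ℝ^d)` and the distance at exponents `(η,η')` also tends to `0`. -/
theorem scrp_interpolation
    {n d : ℕ} (T : ℝ) (hT : 0 < T)
    (ℱ : Filtration ℝ m0) (μ : Measure Ω) [IsProbabilityMeasure μ]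
    (hcompl : ∀ t : ℝ, ∀ s : Set Ω, μ s = 0 → MeasurableSet[ℱ t] s)
    (p γ γ' lam lam' : ℝ) (hp : 2 ≤ p)
    (hγ0 : 0 ≤ γ) (hγ'0 : 0 ≤ γ') (hlam1 : lam ≤ 1) (hlam'1 : lam' ≤ 1)
    (hγlam : γ < lam) (hγ'lam' : γ' < lam')
    (W : ℕ → ℝ → (Fin n → ℝ))
    (X : ℕ → ℝ → Ω → (Fin d → ℝ))
    (X' : ℕ → ℝ → Ω → ((Fin n → ℝ) →L[ℝ] (Fin d → ℝ)))
    (h1 : ∀ k : ℕ, 1 ≤ k → MemSCRP T ℱ μ (W k) lam lam' p (X k) (X' k))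
    (h1bdd : (⨆ k : {k : ℕ // 1 ≤ k},
      scrpNorm T ℱ μ (W k) lam lam' p (X k) (X' k)) < ⊤)
    (h2 : MemSCRP T ℱ μ (W 0) γ γ' p (X 0) (X' 0))
    (h3 : Tendsto
      (fun k => scrpDist T ℱ μ (W k) (W 0) γ γ' p (X k) (X' k) (X 0) (X' 0))
      atTop (𝓝 0)) :
    ∀ η η' : ℝ, γ < η → η < lam → γ' < η' → η' < lam' →
      MemSCRP T ℱ μ (W 0) η η' p (X 0) (X' 0) ∧
      Tendsto
        (fun k => scrpDist T ℱ μ (W k) (W 0) η η' p (X k) (X' k) (X 0) (X' 0))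
        atTop (𝓝 0) :=
  scrp_interpolation_general T ℱ μ p γ γ' lam lam' hp W X X' h1 h1bdd h2 h3
end
end

section
/- Let V and V̄ be normed real vector spaces with V finite-dimensional, let g : V → V̄ be twice continuously (Fréchet) differentiable, and suppose there exist K > 0 and m ≥ 1 such that ‖Dg(x)‖ + ‖D²g(x)‖ ≤ K(1 + ‖x‖)^m for every x ∈ V. Then for all a, b, c, d ∈ V: ‖g(a) − g(b) − g(c) + g(d)‖ ≤ K (1 + ‖a‖ + ‖b‖ + ‖c‖ + ‖d‖)^m · ( (‖a−c‖ + ‖b−d‖) ‖c−d‖ + ‖a − b − c + d‖ ). -/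
/-!
Write `g a - g b - g c + g d` as `(g a - g (b + c - d))` plus the pure second difference
`g (d + u + v) - g (d + u) - g (d + v) + g d` with `u = b - d`, `v = c - d`. The first part is
controlled by `Dg` through the mean value inequality; the second is the increment along `v` of
`y ↦ g (y + u) - g y`, whose derivative `Dg (y + u) - Dg y` is controlled by `D²g`. Every point
involved lies in the closed ball of radius `‖a‖ + ‖b‖ + ‖c‖ + ‖d‖`, on which the growth bound
gives `‖Dg‖, ‖D²g‖ ≤ K (1 + ‖a‖ + ‖b‖ + ‖c‖ + ‖d‖) ^ m`.
-/

open Metric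

section SecondDifference

variable {E F : Type*} [NormedAddCommGroup E] [NormedSpace ℝ E]
  [NormedAddCommGroup F] [NormedSpace ℝ F] {g : E → F} {s : Set E}

theorem Convex.norm_second_difference_le {C : ℝ} (hs : Convex ℝ s)
    (hg : ∀ y ∈ s, DifferentiableAt ℝ g y) (hg' : ∀ y ∈ s, DifferentiableAt ℝ (fderiv ℝ g) y)
    (hC : ∀ y ∈ s, ‖fderiv ℝ (fderiv ℝ g) y‖ ≤ C) {x u v : E} (hx : x ∈ s) (hxu : x + u ∈ s)
    (hxv : x + v ∈ s) (hxuv : x + u + v ∈ s) :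
    ‖g (x + u + v) - g (x + u) - g (x + v) + g x‖ ≤ C * ‖u‖ * ‖v‖ := by
  have hshift : ∀ y ∈ segment ℝ x (x + v), y + u ∈ s := by
    intro y hy
    have hyu : u + y ∈ segment ℝ (u + x) (u + (x + v)) := (mem_segment_translate ℝ u).mpr hy
    rw [show u + (x + v) = x + u + v by abel, add_comm u x, add_comm u y] at hyu
    exact hs.segment_subset hxu hxuv hyu
  have hseg : segment ℝ x (x + v) ⊆ s := hs.segment_subset hx hxv
  have hderiv : ∀ y ∈ segment ℝ x (x + v),
      HasFDerivAt (fun z ↦ g (z + u) - g z) (fderiv ℝ g (y + u) - fderiv ℝ g y) y := fun y hy ↦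
    ((hasFDerivAt_comp_add_right u).mpr (hg _ (hshift y hy)).hasFDerivAt).sub
      (hg y (hseg hy)).hasFDerivAt
  have hbound : ∀ y ∈ segment ℝ x (x + v), ‖fderiv ℝ g (y + u) - fderiv ℝ g y‖ ≤ C * ‖u‖ :=
    fun y hy ↦ by
      simpa using hs.norm_image_sub_le_of_norm_fderiv_le hg' hC (hseg hy) (hshift y hy)
  calc ‖g (x + u + v) - g (x + u) - g (x + v) + g x‖
      = ‖(g (x + v + u) - g (x + v)) - (g (x + u) - g x)‖ := by
        rw [add_right_comm x u v]; congr 1; abel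
    _ ≤ C * ‖u‖ * ‖x + v - x‖ :=
        (convex_segment x (x + v)).norm_image_sub_le_of_norm_hasFDerivWithin_le
          (fun y hy ↦ (hderiv y hy).hasFDerivWithinAt) hbound (left_mem_segment ℝ x (x + v))
          (right_mem_segment ℝ x (x + v))
    _ = C * ‖u‖ * ‖v‖ := by rw [add_sub_cancel_left]

theorem Convex.norm_sub_sub_add_le {C₁ C₂ : ℝ} (hs : Convex ℝ s)
    (hg : ∀ y ∈ s, DifferentiableAt ℝ g y) (hg' : ∀ y ∈ s, DifferentiableAt ℝ (fderiv ℝ g) y)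
    (hC₁ : ∀ y ∈ s, ‖fderiv ℝ g y‖ ≤ C₁) (hC₂ : ∀ y ∈ s, ‖fderiv ℝ (fderiv ℝ g) y‖ ≤ C₂)
    {a b c d : E} (ha : a ∈ s) (hb : b ∈ s) (hc : c ∈ s) (hd : d ∈ s) (hbcd : b + c - d ∈ s) :
    ‖g a - g b - g c + g d‖ ≤ C₁ * ‖a - b - c + d‖ + C₂ * ‖b - d‖ * ‖c - d‖ := by
  have hfirst : ‖g a - g (b + c - d)‖ ≤ C₁ * ‖a - b - c + d‖ := by
    simpa only [sub_add, sub_sub] using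
      hs.norm_image_sub_le_of_norm_fderiv_le hg hC₁ hbcd ha
  have hcorner : d + (b - d) + (c - d) = b + c - d := by abel
  have hsecond := hs.norm_second_difference_le hg hg' hC₂ (x := d) (u := b - d) (v := c - d)
    hd (by simpa using hb) (by simpa using hc) (hcorner ▸ hbcd)
  rw [hcorner, add_sub_cancel, add_sub_cancel] at hsecond
  have hdecomp : g a - g b - g c + g d =
      (g a - g (b + c - d)) + (g (b + c - d) - g b - g c + g d) := by
    abel
  rw [hdecomp]
  exact (norm_add_le _ _).trans (add_le_add hfirst hsecond)

end SecondDifference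

theorem norm_fderiv_add_norm_fderiv_fderiv_le_of_growth {V W : Type*} [NormedAddCommGroup V]
    [NormedSpace ℝ V] [NormedAddCommGroup W] [NormedSpace ℝ W] {g : V → W} {K m R : ℝ}
    (hm : 0 ≤ m)
    (hbd : ∀ x : V, ‖fderiv ℝ g x‖ + ‖iteratedFDeriv ℝ 2 g x‖ ≤ K * (1 + ‖x‖) ^ m)
    {y : V} (hy : ‖y‖ ≤ R) :
    ‖fderiv ℝ g y‖ + ‖fderiv ℝ (fderiv ℝ g) y‖ ≤ K * (1 + R) ^ m := by
  have hK : 0 ≤ K := by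
    simpa using (add_nonneg (norm_nonneg _) (norm_nonneg _)).trans (hbd 0)
  rw [← norm_iteratedFDeriv_one (fderiv ℝ g), norm_iteratedFDeriv_fderiv]
  refine (hbd y).trans ?_
  gcongr

theorem polynomial_growth_second_difference_estimate_general
    {V W : Type*} [NormedAddCommGroup V] [NormedSpace ℝ V]
    [NormedAddCommGroup W] [NormedSpace ℝ W]
    (g : V → W) (hg : ContDiff ℝ 2 g)
    (K m : ℝ) (hm : 1 ≤ m)
    (hbd : ∀ x : V, ‖fderiv ℝ g x‖ + ‖iteratedFDeriv ℝ 2 g x‖ ≤ K * (1 + ‖x‖) ^ m) :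
    ∀ a b c d : V,
      ‖g a - g b - g c + g d‖ ≤
        K * (1 + ‖a‖ + ‖b‖ + ‖c‖ + ‖d‖) ^ m *
          ((‖a - c‖ + ‖b - d‖) * ‖c - d‖ + ‖a - b - c + d‖) := by
  intro a b c d
  rw [show 1 + ‖a‖ + ‖b‖ + ‖c‖ + ‖d‖ = 1 + (‖a‖ + ‖b‖ + ‖c‖ + ‖d‖) by ring]
  set R := ‖a‖ + ‖b‖ + ‖c‖ + ‖d‖
  set M := K * (1 + R) ^ m
  have hgrowth : ∀ y ∈ closedBall (0 : V) R,
      ‖fderiv ℝ g y‖ + ‖fderiv ℝ (fderiv ℝ g) y‖ ≤ M := fun y hy ↦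
    norm_fderiv_add_norm_fderiv_fderiv_le_of_growth (by linarith) hbd
      (mem_closedBall_zero_iff.mp hy)
  have hball : ∀ y, ‖y‖ ≤ R → y ∈ closedBall (0 : V) R := fun y ↦ mem_closedBall_zero_iff.mpr
  have hR : 0 ≤ ‖a‖ ∧ 0 ≤ ‖b‖ ∧ 0 ≤ ‖c‖ ∧ 0 ≤ ‖d‖ :=
    ⟨norm_nonneg a, norm_nonneg b, norm_nonneg c, norm_nonneg d⟩
  have hM : 0 ≤ M := le_trans (by positivity) (hgrowth a (hball a (by linarith)))
  have hestimate := (convex_closedBall (0 : V) R).norm_sub_sub_add_le (C₁ := M) (C₂ := M)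
    (fun y _ ↦ (hg.differentiable two_ne_zero).differentiableAt)
    (fun y _ ↦ ((hg.fderiv_right (by norm_num)).differentiable one_ne_zero).differentiableAt)
    (fun y hy ↦ by linarith [hgrowth y hy, norm_nonneg (fderiv ℝ (fderiv ℝ g) y)])
    (fun y hy ↦ by linarith [hgrowth y hy, norm_nonneg (fderiv ℝ g y)])
    (hball a (by linarith)) (hball b (by linarith)) (hball c (by linarith)) (hball d (by linarith))
    (hball _ ((norm_sub_le _ _).trans (by linarith [norm_add_le b c])))
  refine hestimate.trans ?_
  nlinarith [mul_nonneg (mul_nonneg hM (norm_nonneg (a - c))) (norm_nonneg (c - d))]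

/-- **Elementary estimate for functions of polynomial growth.** Let `g : V → W` be twice
continuously Fréchet differentiable between normed real vector spaces (`V` finite
dimensional), with `‖Dg(x)‖ + ‖D²g(x)‖ ≤ K(1 + ‖x‖)^m` for all `x` (for some `K > 0`,
`m ≥ 1`), where `D²g(x)` is normed as a bilinear map. Then for all `a b c d : V`,
`‖g a − g b − g c + g d‖ ≤ K (1 + ‖a‖ + ‖b‖ + ‖c‖ + ‖d‖)^m
  ((‖a−c‖ + ‖b−d‖)‖c−d‖ + ‖a − b − c + d‖)`. -/
theorem polynomial_growth_second_difference_estimate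
    {V W : Type*} [NormedAddCommGroup V] [NormedSpace ℝ V] [FiniteDimensional ℝ V]
    [NormedAddCommGroup W] [NormedSpace ℝ W]
    (g : V → W) (hg : ContDiff ℝ 2 g)
    (K m : ℝ) (hK : 0 < K) (hm : 1 ≤ m)
    (hbd : ∀ x : V, ‖fderiv ℝ g x‖ + ‖iteratedFDeriv ℝ 2 g x‖ ≤ K * (1 + ‖x‖) ^ m) :
    ∀ a b c d : V,
      ‖g a - g b - g c + g d‖ ≤
        K * (1 + ‖a‖ + ‖b‖ + ‖c‖ + ‖d‖) ^ m *
          ((‖a - c‖ + ‖b - d‖) * ‖c - d‖ + ‖a - b - c + d‖) :=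
  polynomial_growth_second_difference_estimate_general g hg K m hm hbd
end

section
/- Let (𝓤, ρ) be a metric space, let o ∈ U ⊆ 𝓤 with U nonempty, and on a probability space (Ω, 𝓕, ℙ) let {X^ζ}_{ζ ∈ U} be a family of real-valued random variables, each in L^p(Ω) for every p ∈ [1,∞), which is 𝓛-continuous. Assume moreover that for every R > 0 and every p ∈ [1,∞), sup_{ζ ∈ U, ρ(ζ,o) ≤ R} ‖ e^{|X^ζ|} ‖_{L^p(Ω)} < ∞. Then the family {e^{X^ζ}}_{ζ ∈ U} is 𝓛-continuous. -/
/-!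
Since `|e^a - e^b| ≤ |a - b| (e^{|a|} + e^{|b|})`, Hölder's inequality with exponents
`2p, 2p` bounds `‖e^{X^ζ} - e^{X^{ζ⁰}}‖_p` by
`‖X^ζ - X^{ζ⁰}‖_{2p} (‖e^{|X^ζ|}‖_{2p} + ‖e^{|X^{ζ⁰}|}‖_{2p})`.
A convergent sequence `ζⁿ → ζ⁰` stays in a ball around `o`, on which the second factor is
bounded by hypothesis, while the first tends to `0` by `𝓛`-continuity of `X`.
-/

open MeasureTheory Filter Topology
open scoped ENNReal

namespace Real

lemma exp_sub_exp_le_mul_exp (a b : ℝ) : exp a - exp b ≤ (a - b) * exp a := by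
  have h : exp a * (1 - (a - b)) ≤ exp b := by
    calc exp a * (1 - (a - b)) ≤ exp a * exp (-(a - b)) :=
          mul_le_mul_of_nonneg_left (one_sub_le_exp_neg _) (exp_pos a).le
      _ = exp b := by rw [← exp_add]; ring_nf
  linarith

lemma abs_exp_sub_exp_le (a b : ℝ) : |exp a - exp b| ≤ |a - b| * (exp |a| + exp |b|) := by
  wlog hba : b ≤ a generalizing a b
  · simpa only [abs_sub_comm, add_comm] using this b a (le_of_not_ge hba)
  rw [abs_of_nonneg (sub_nonneg.2 (exp_le_exp.2 hba)), abs_of_nonneg (sub_nonneg.2 hba)]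
  calc exp a - exp b ≤ (a - b) * exp a := exp_sub_exp_le_mul_exp a b
    _ ≤ (a - b) * (exp |a| + exp |b|) := by
      gcongr
      linarith [exp_le_exp.2 (le_abs_self a), exp_pos |b|]

end Real

namespace ENNReal

instance holderTriple_two_mul (p : ℝ≥0∞) : HolderTriple (2 * p) (2 * p) p where
  inv_add_inv_eq_inv := by
    rw [← two_mul, ENNReal.mul_inv (by simp) (by simp), ← mul_assoc,
      ENNReal.mul_inv_cancel (by simp) (by simp), one_mul]

end ENNReal

lemma Metric.exists_pos_dist_le_of_tendsto {α : Type*} [PseudoMetricSpace α] {z : ℕ → α}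
    {x : α} (hz : Tendsto z atTop (𝓝 x)) (o : α) :
    ∃ R > 0, dist x o ≤ R ∧ ∀ k, dist (z k) o ≤ R := by
  obtain ⟨r, hr⟩ := ((isBounded_range_of_tendsto z hz).insert x).subset_closedBall o
  refine ⟨max r 1, by positivity, ?_, fun k => ?_⟩
  · exact (mem_closedBall.1 (hr (Set.mem_insert x _))).trans (le_max_left r 1)
  · exact (mem_closedBall.1 (hr (Set.mem_insert_of_mem x ⟨k, rfl⟩))).trans (le_max_left r 1)

namespace MeasureTheory

variable {Ω : Type*} [MeasurableSpace Ω] {μ : Measure Ω}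

lemma memLp_exp_of_eLpNorm_exp_abs_lt_top {f : Ω → ℝ} {p : ℝ≥0∞}
    (hf : AEStronglyMeasurable f μ) (h : eLpNorm (fun ω => Real.exp |f ω|) p μ < ⊤) :
    MemLp (fun ω => Real.exp (f ω)) p μ := by
  refine ⟨Real.continuous_exp.comp_aestronglyMeasurable hf, (eLpNorm_mono fun ω => ?_).trans_lt h⟩
  simp only [Real.norm_eq_abs, Real.abs_exp]
  exact Real.exp_le_exp.2 (le_abs_self _)

lemma eLpNorm_exp_sub_exp_le {f g : Ω → ℝ} (hf : AEStronglyMeasurable f μ)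
    (hg : AEStronglyMeasurable g μ) {p : ℝ≥0∞} (hp : 1 ≤ 2 * p) :
    eLpNorm (fun ω => Real.exp (f ω) - Real.exp (g ω)) p μ ≤
      eLpNorm (fun ω => f ω - g ω) (2 * p) μ *
        (eLpNorm (fun ω => Real.exp |f ω|) (2 * p) μ +
          eLpNorm (fun ω => Real.exp |g ω|) (2 * p) μ) := by
  have hexp_abs : ∀ {h : Ω → ℝ}, AEStronglyMeasurable h μ →
      AEStronglyMeasurable (fun ω => Real.exp |h ω|) μ := fun hh =>
    (Real.continuous_exp.comp continuous_abs).comp_aestronglyMeasurable hh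
  calc eLpNorm (fun ω => Real.exp (f ω) - Real.exp (g ω)) p μ
      ≤ eLpNorm (fun ω => (f ω - g ω) * (Real.exp |f ω| + Real.exp |g ω|)) p μ := by
        refine eLpNorm_mono fun ω => ?_
        rw [Real.norm_eq_abs, Real.norm_eq_abs, abs_mul]
        exact (Real.abs_exp_sub_exp_le _ _).trans
          (mul_le_mul_of_nonneg_left (le_abs_self _) (abs_nonneg _))
    _ ≤ eLpNorm (fun ω => f ω - g ω) (2 * p) μ *
          eLpNorm (fun ω => Real.exp |f ω| + Real.exp |g ω|) (2 * p) μ := by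
        simpa only [ENNReal.coe_one, one_mul] using
          eLpNorm_le_eLpNorm_mul_eLpNorm'_of_norm (r := p) (f := fun ω => f ω - g ω)
            (g := fun ω => Real.exp |f ω| + Real.exp |g ω|) (hf.sub hg)
            ((hexp_abs hf).add (hexp_abs hg)) (· * ·) 1
            (Eventually.of_forall fun ω => by simp [norm_mul])
    _ ≤ _ := by gcongr; exact eLpNorm_add_le (hexp_abs hf) (hexp_abs hg) hp

lemma tendsto_eLpNorm_exp_sub_exp {ι : Type*} {l : Filter ι} {f : ι → Ω → ℝ} {g : Ω → ℝ}
    (hf : ∀ i, AEStronglyMeasurable (f i) μ) (hg : AEStronglyMeasurable g μ)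
    {p : ℝ≥0∞} (hp : 1 ≤ 2 * p)
    (hfg : Tendsto (fun i => eLpNorm (fun ω => f i ω - g ω) (2 * p) μ) l (𝓝 0))
    {M : ℝ≥0∞} (hM : M ≠ ⊤) (hfM : ∀ i, eLpNorm (fun ω => Real.exp |f i ω|) (2 * p) μ ≤ M)
    (hgM : eLpNorm (fun ω => Real.exp |g ω|) (2 * p) μ ≤ M) :
    Tendsto (fun i => eLpNorm (fun ω => Real.exp (f i ω) - Real.exp (g ω)) p μ) l (𝓝 0) := by
  have hbound :
      Tendsto (fun i => eLpNorm (fun ω => f i ω - g ω) (2 * p) μ * (M + M)) l (𝓝 0) := by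
    simpa using ENNReal.Tendsto.mul_const hfg (Or.inr (ENNReal.add_ne_top.2 ⟨hM, hM⟩))
  refine tendsto_of_tendsto_of_tendsto_of_le_of_le tendsto_const_nhds hbound (fun _ => zero_le)
    fun i => (eLpNorm_exp_sub_exp_le (hf i) hg hp).trans ?_
  gcongr
  exact hfM i

end MeasureTheory

open MeasureTheory

theorem exp_LContinuous_general
    {𝓤 : Type*} [MetricSpace 𝓤] (U : Set 𝓤) (o : 𝓤)
    {Ω : Type*} [MeasurableSpace Ω] (μ : Measure Ω)
    (X : 𝓤 → Ω → ℝ)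
    (hmem : ∀ ζ ∈ U, ∀ p : ℝ, 1 ≤ p → MemLp (X ζ) (ENNReal.ofReal p) μ)
    (hcont : ∀ ζ0 ∈ U, ∀ z : ℕ → 𝓤, (∀ k, z k ∈ U \ {ζ0}) → Tendsto z atTop (𝓝 ζ0) →
      ∀ p : ℝ, 1 ≤ p →
        Tendsto (fun k => eLpNorm (fun ω => X (z k) ω - X ζ0 ω) (ENNReal.ofReal p) μ)
          atTop (𝓝 0))
    (hexp : ∀ R : ℝ, 0 < R → ∀ p : ℝ, 1 ≤ p →
      (⨆ ζ : {ζ : 𝓤 // ζ ∈ U ∧ dist ζ o ≤ R},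
        eLpNorm (fun ω => Real.exp |X ζ ω|) (ENNReal.ofReal p) μ) < ⊤) :
    (∀ ζ ∈ U, ∀ p : ℝ, 1 ≤ p →
      MemLp (fun ω => Real.exp (X ζ ω)) (ENNReal.ofReal p) μ) ∧
    (∀ ζ0 ∈ U, ∀ z : ℕ → 𝓤, (∀ k, z k ∈ U \ {ζ0}) → Tendsto z atTop (𝓝 ζ0) →
      ∀ p : ℝ, 1 ≤ p →
        Tendsto (fun k =>
            eLpNorm (fun ω => Real.exp (X (z k) ω) - Real.exp (X ζ0 ω))
              (ENNReal.ofReal p) μ)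
          atTop (𝓝 0)) := by
  have hX : ∀ ζ ∈ U, AEStronglyMeasurable (X ζ) μ := fun ζ hζ => (hmem ζ hζ 1 le_rfl).1
  have hle_iSup : ∀ R p, ∀ ζ ∈ U, dist ζ o ≤ R →
      eLpNorm (fun ω => Real.exp |X ζ ω|) (ENNReal.ofReal p) μ ≤
        ⨆ ζ' : {ζ' : 𝓤 // ζ' ∈ U ∧ dist ζ' o ≤ R},
          eLpNorm (fun ω => Real.exp |X ζ' ω|) (ENNReal.ofReal p) μ :=
    fun R _ ζ hζ hd =>
      le_iSup_of_le (ι := {ζ' : 𝓤 // ζ' ∈ U ∧ dist ζ' o ≤ R}) ⟨ζ, hζ, hd⟩ le_rfl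
  refine ⟨fun ζ hζ p hp => ?_, fun ζ0 hζ0 z hz hzt p hp => ?_⟩
  · have hR : 0 < dist ζ o + 1 := by positivity
    exact memLp_exp_of_eLpNorm_exp_abs_lt_top (hX ζ hζ)
      ((hle_iSup _ p ζ hζ (by linarith)).trans_lt (hexp _ hR p hp))
  · obtain ⟨R, hR, hζ0R, hzR⟩ := Metric.exists_pos_dist_le_of_tendsto hzt o
    have hp2 : 1 ≤ 2 * p := by linarith
    have h2p : ENNReal.ofReal (2 * p) = 2 * ENNReal.ofReal p := by
      rw [ENNReal.ofReal_mul zero_le_two, ENNReal.ofReal_ofNat]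
    have hlim := hcont ζ0 hζ0 z hz hzt (2 * p) hp2
    have hbound := hle_iSup R (2 * p)
    have hone : 1 ≤ ENNReal.ofReal (2 * p) := ENNReal.one_le_ofReal.2 hp2
    have hM := (hexp R hR _ hp2).ne
    rw [h2p] at hlim hbound hone hM
    exact tendsto_eLpNorm_exp_sub_exp (fun k => hX _ (hz k).1) (hX ζ0 hζ0) hone hlim hM
      (fun k => hbound _ (hz k).1 (hzR k)) (hbound ζ0 hζ0 hζ0R)

/-- **`𝓛`-continuity of exponentials.** Let `{X^ζ}_{ζ ∈ U}` be an `𝓛`-continuous family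
of real random variables (each in every `L^p(Ω)`, `p ∈ [1,∞)`) indexed by a nonempty
subset `U` (with basepoint `o ∈ U`) of a metric space, and assume that for every `R > 0`
and every `p ∈ [1,∞)`, `sup_{ζ ∈ U, dist(ζ,o) ≤ R} ‖e^{|X^ζ|}‖_{L^p} < ∞`. Then the
family `{e^{X^ζ}}_{ζ ∈ U}` lies in every `L^p(Ω)` and is `𝓛`-continuous. -/
theorem exp_LContinuous
    {𝓤 : Type*} [MetricSpace 𝓤] (U : Set 𝓤) (o : 𝓤) (ho : o ∈ U)
    {Ω : Type*} [MeasurableSpace Ω] (μ : Measure Ω) [IsProbabilityMeasure μ]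
    (X : 𝓤 → Ω → ℝ)
    (hmem : ∀ ζ ∈ U, ∀ p : ℝ, 1 ≤ p → MemLp (X ζ) (ENNReal.ofReal p) μ)
    (hcont : ∀ ζ0 ∈ U, ∀ z : ℕ → 𝓤, (∀ k, z k ∈ U \ {ζ0}) → Tendsto z atTop (𝓝 ζ0) →
      ∀ p : ℝ, 1 ≤ p →
        Tendsto (fun k => eLpNorm (fun ω => X (z k) ω - X ζ0 ω) (ENNReal.ofReal p) μ)
          atTop (𝓝 0))
    (hexp : ∀ R : ℝ, 0 < R → ∀ p : ℝ, 1 ≤ p →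
      (⨆ ζ : {ζ : 𝓤 // ζ ∈ U ∧ dist ζ o ≤ R},
        eLpNorm (fun ω => Real.exp |X ζ ω|) (ENNReal.ofReal p) μ) < ⊤) :
    (∀ ζ ∈ U, ∀ p : ℝ, 1 ≤ p →
      MemLp (fun ω => Real.exp (X ζ ω)) (ENNReal.ofReal p) μ) ∧
    (∀ ζ0 ∈ U, ∀ z : ℕ → 𝓤, (∀ k, z k ∈ U \ {ζ0}) → Tendsto z atTop (𝓝 ζ0) →
      ∀ p : ℝ, 1 ≤ p →
        Tendsto (fun k =>
            eLpNorm (fun ω => Real.exp (X (z k) ω) - Real.exp (X ζ0 ω))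
              (ENNReal.ofReal p) μ)
          atTop (𝓝 0)) :=
  exp_LContinuous_general U o μ X hmem hcont hexp
end
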